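/- Consider the Kalman-filter update step on an estimated support. Let $A_T \in \mathbb{R}^{n \times k_1}$ and $A_\Delta \in \mathbb{R}^{n \times k_2}$ be real matrices, $P$ a symmetric positive definite $k_1 \times k_1$ matrix, $\sigma > 0$, and set $M = A_T^\top A_T + \sigma^2 P^{-1}$ and $K = M^{-1} A_T^\top$. Suppose the observation is $y = A_T x_T + A_\Delta x_\Delta + w$ for vectors $x_T \in \mathbb{R}^{k_1}$, $x_\Delta \in \mathbb{R}^{k_2}$, $w \in \mathbb{R}^n$, and the updated estimate is $\hat{x}_T = (I - K A_T)\hat{x}_T^{prev} + K y$ for some $\hat{x}_T^{prev} \in \mathbb{R}^{k_1}$. Then the residual signal $\beta_T := x_T - \hat{x}_T$ satisfies $\beta_T = M^{-1}\big( \sigma^2 P^{-1}(x_T - \hat{x}_T^{prev}) - A_T^\top A_\Delta x_\Delta - A_T^\top w \big)$, and consequently $\|\beta_T\|_2 \le \|M^{-1}\|_2 \big( \sigma^2 \|P^{-1}\|_2 \|x_T - \hat{x}_T^{prev}\|_2 + \|A_T^\top A_\Delta\|_2 \|x_\Delta\|_2 + \|A_T^\top w\|_2 \big)$. -/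

import Mathlib

/-!
Since `M = A_Tᵀ A_T + σ² P⁻¹` is positive definite, the gain `K = M⁻¹ A_Tᵀ` satisfies
`I - K A_T = M⁻¹ (M - A_Tᵀ A_T) = σ² M⁻¹ P⁻¹`. Substituting the observation into the update gives
`β_T = (I - K A_T)(x_T - x̂_Tᵖʳᵉᵛ) - K (A_Δ x_Δ + w)`, which is the identity; the bound follows
from the triangle inequality and `‖A v‖ ≤ ‖A‖₂ ‖v‖`.
-/

open Matrix

/-- Spectral norm (induced 2-norm) of a real matrix. -/
noncomputable def matSpectralNorm {m n : ℕ} (A : Matrix (Fin m) (Fin n) ℝ) : ℝ :=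
  ‖LinearMap.toContinuousLinearMap (Matrix.toEuclideanLin A)‖

/-- Matrix–vector multiplication, with the result regarded as an element of
Euclidean space (so that `‖·‖` is the Euclidean norm). -/
def mulVecE {m n : ℕ} (A : Matrix (Fin m) (Fin n) ℝ) (v : EuclideanSpace ℝ (Fin n)) :
    EuclideanSpace ℝ (Fin m) :=
  WithLp.toLp 2 (A.mulVec v)

section mulVecE

variable {m n p : ℕ}

@[simp] lemma mulVecE_add (A : Matrix (Fin m) (Fin n) ℝ) (u v : EuclideanSpace ℝ (Fin n)) :
    mulVecE A (u + v) = mulVecE A u + mulVecE A v := by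
  simp [mulVecE, mulVec_add]

@[simp] lemma mulVecE_sub (A : Matrix (Fin m) (Fin n) ℝ) (u v : EuclideanSpace ℝ (Fin n)) :
    mulVecE A (u - v) = mulVecE A u - mulVecE A v := by
  simp [mulVecE, mulVec_sub]

@[simp] lemma smul_mulVecE (a : ℝ) (A : Matrix (Fin m) (Fin n) ℝ) (v : EuclideanSpace ℝ (Fin n)) :
    mulVecE (a • A) v = a • mulVecE A v := by
  simp [mulVecE, smul_mulVec]

@[simp] lemma one_mulVecE (v : EuclideanSpace ℝ (Fin n)) : mulVecE 1 v = v := by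
  simp [mulVecE]

@[simp] lemma sub_mulVecE (A B : Matrix (Fin m) (Fin n) ℝ) (v : EuclideanSpace ℝ (Fin n)) :
    mulVecE (A - B) v = mulVecE A v - mulVecE B v := by
  simp [mulVecE, sub_mulVec]

@[simp] lemma mulVecE_mulVecE (A : Matrix (Fin m) (Fin n) ℝ) (B : Matrix (Fin n) (Fin p) ℝ)
    (v : EuclideanSpace ℝ (Fin p)) : mulVecE A (mulVecE B v) = mulVecE (A * B) v := by
  simp [mulVecE, mulVec_mulVec]

lemma norm_mulVecE_le (A : Matrix (Fin m) (Fin n) ℝ) (v : EuclideanSpace ℝ (Fin n)) :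
    ‖mulVecE A v‖ ≤ matSpectralNorm A * ‖v‖ :=
  (LinearMap.toContinuousLinearMap (toEuclideanLin A)).le_opNorm v

lemma matSpectralNorm_nonneg (A : Matrix (Fin m) (Fin n) ℝ) : 0 ≤ matSpectralNorm A :=
  norm_nonneg _

end mulVecE

lemma Matrix.PosDef.transpose_mul_self_add {m n : Type*} [Fintype m] [Fintype n] [DecidableEq n]
    (A : Matrix m n ℝ) {P : Matrix n n ℝ} (hP : P.PosDef) {c : ℝ} (hc : 0 < c) :
    (Aᵀ * A + c • P⁻¹).PosDef := by
  simpa using PosDef.posSemidef_add (posSemidef_conjTranspose_mul_self A) (hP.inv.smul hc)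

lemma Matrix.inv_mul_eq_one_sub_inv_mul {n K : Type*} [Fintype n] [DecidableEq n] [CommRing K]
    {M G R : Matrix n n K} (hM : IsUnit M.det) (h : M = G + R) : M⁻¹ * R = 1 - M⁻¹ * G := by
  rw [eq_sub_iff_add_eq, ← Matrix.mul_add, add_comm, ← h, nonsing_inv_mul _ hM]

lemma kalman_residual_eq {n k₁ k₂ : ℕ} {A_T : Matrix (Fin n) (Fin k₁) ℝ}
    (A_Δ : Matrix (Fin n) (Fin k₂) ℝ) {M R : Matrix (Fin k₁) (Fin k₁) ℝ}
    (hM : IsUnit M.det) (hMR : M = A_Tᵀ * A_T + R)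
    (x xPrev : EuclideanSpace ℝ (Fin k₁)) (x_Δ : EuclideanSpace ℝ (Fin k₂))
    (w : EuclideanSpace ℝ (Fin n)) :
    x - (mulVecE (1 - M⁻¹ * A_Tᵀ * A_T) xPrev +
        mulVecE (M⁻¹ * A_Tᵀ) (mulVecE A_T x + mulVecE A_Δ x_Δ + w)) =
      mulVecE M⁻¹ (mulVecE R (x - xPrev) - mulVecE (A_Tᵀ * A_Δ) x_Δ - mulVecE A_Tᵀ w) := by
  have hgain : M⁻¹ * R = 1 - M⁻¹ * A_Tᵀ * A_T := by
    rw [Matrix.mul_assoc]; exact inv_mul_eq_one_sub_inv_mul hM hMR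
  have hsplit : mulVecE M⁻¹ (mulVecE R (x - xPrev)) =
      mulVecE (1 - M⁻¹ * A_Tᵀ * A_T) (x - xPrev) := by
    rw [mulVecE_mulVecE, hgain]
  simp only [mulVecE_sub, mulVecE_add, mulVecE_mulVecE, sub_mulVecE, one_mulVecE,
    ← Matrix.mul_assoc] at hsplit ⊢
  rw [hsplit]
  abel

lemma norm_mulVecE_sub_sub_le {m n : ℕ} (M : Matrix (Fin m) (Fin n) ℝ)
    (u v w : EuclideanSpace ℝ (Fin n)) :
    ‖mulVecE M (u - v - w)‖ ≤ matSpectralNorm M * (‖u‖ + ‖v‖ + ‖w‖) :=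
  (norm_mulVecE_le M _).trans <| mul_le_mul_of_nonneg_left
    ((norm_sub_le _ _).trans (add_le_add_left (norm_sub_le _ _) _)) (matSpectralNorm_nonneg M)

/-- Kalman update residual on the estimated support. With
`M = A_Tᵀ A_T + σ² P⁻¹`, `K = M⁻¹ A_Tᵀ`, observation `y = A_T x_T + A_Δ x_Δ + w`,
and update `x̂_T = (I - K A_T) x̂_Tᵖʳᵉᵛ + K y`, the residual `β_T = x_T - x̂_T`
satisfies the stated identity and norm bound. -/
theorem kf_residual_identity_and_bound {n k₁ k₂ : ℕ}
    (A_T : Matrix (Fin n) (Fin k₁) ℝ) (A_Δ : Matrix (Fin n) (Fin k₂) ℝ)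
    (P : Matrix (Fin k₁) (Fin k₁) ℝ) (hP : P.PosDef) (σ : ℝ) (hσ : 0 < σ)
    (M : Matrix (Fin k₁) (Fin k₁) ℝ) (hM : M = A_Tᵀ * A_T + σ ^ 2 • P⁻¹)
    (K : Matrix (Fin k₁) (Fin n) ℝ) (hK : K = M⁻¹ * A_Tᵀ)
    (x_T xhatPrev : EuclideanSpace ℝ (Fin k₁)) (x_Δ : EuclideanSpace ℝ (Fin k₂))
    (w y : EuclideanSpace ℝ (Fin n))
    (hy : y = mulVecE A_T x_T + mulVecE A_Δ x_Δ + w)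
    (xhat_T : EuclideanSpace ℝ (Fin k₁))
    (hxhat : xhat_T = mulVecE ((1 : Matrix (Fin k₁) (Fin k₁) ℝ) - K * A_T) xhatPrev +
      mulVecE K y)
    (β_T : EuclideanSpace ℝ (Fin k₁)) (hβ : β_T = x_T - xhat_T) :
    β_T = mulVecE M⁻¹ (σ ^ 2 • mulVecE P⁻¹ (x_T - xhatPrev) -
        mulVecE (A_Tᵀ * A_Δ) x_Δ - mulVecE A_Tᵀ w) ∧
    ‖β_T‖ ≤ matSpectralNorm M⁻¹ *
      (σ ^ 2 * matSpectralNorm P⁻¹ * ‖x_T - xhatPrev‖ +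
        matSpectralNorm (A_Tᵀ * A_Δ) * ‖x_Δ‖ + ‖mulVecE A_Tᵀ w‖) := by
  have hMdet : IsUnit M.det :=
    (isUnit_iff_isUnit_det M).1 (hM ▸ PosDef.transpose_mul_self_add A_T hP (pow_pos hσ 2)).isUnit
  have hβ_eq : β_T = mulVecE M⁻¹ (σ ^ 2 • mulVecE P⁻¹ (x_T - xhatPrev) -
      mulVecE (A_Tᵀ * A_Δ) x_Δ - mulVecE A_Tᵀ w) := by
    subst hK hy hxhat hβ
    rw [← smul_mulVecE]
    exact kalman_residual_eq A_Δ hMdet hM x_T xhatPrev x_Δ w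
  refine ⟨hβ_eq, hβ_eq ▸ (norm_mulVecE_sub_sub_le _ _ _ _).trans <| mul_le_mul_of_nonneg_left
    (add_le_add_three ?_ (norm_mulVecE_le _ _) le_rfl) (matSpectralNorm_nonneg _)⟩
  rw [norm_smul, Real.norm_of_nonneg (sq_nonneg σ), mul_assoc]
  exact mul_le_mul_of_nonneg_left (norm_mulVecE_le _ _) (sq_nonneg σ)
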